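/- Let ψ : (0,∞) → (0,∞) be concave and increasing, and let ω be a singular dilation-invariant state on ℓ∞ (extended to nonnegative unbounded sequences as a supremum). Assume ω({ψ(2n+1)/ψ(n+1)}_{n≥0}) = 1. Then for any two nonincreasing nonnegative sequences a, b with finite τ_ω values, where τ_ω(x) = ω({(1/ψ(n+1)) ∑_{k=0}^{n} x(k)}_{n≥0}), one has τ_ω(a) + τ_ω(b) = ω({(1/ψ(2n+1)) ∑_{k=0}^{n} (a(k)+b(k))}_{n≥0}). -/

import Mathlib

open Filter
open scoped ENNReal

/-- A sequence `x : ℕ → ℝ` is bounded (an element of `ℓ∞`). -/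
def Bdd (x : ℕ → ℝ) : Prop := ∃ C, ∀ n, |x n| ≤ C

/-- A state on `ℓ∞`: a positive linear functional `ω` with `ω(1) = 1`.
We model it as a function on all sequences whose linearity and positivity
are only required on bounded sequences. -/
structure LinfState where
  toFun : (ℕ → ℝ) → ℝ
  map_add' : ∀ x y, Bdd x → Bdd y → toFun (x + y) = toFun x + toFun y
  map_smul' : ∀ (c : ℝ) (x), Bdd x → toFun (c • x) = c * toFun x
  pos' : ∀ x, Bdd x → (∀ n, 0 ≤ x n) → 0 ≤ toFun x
  map_one' : toFun (fun _ => (1 : ℝ)) = 1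

/-- The extension `ω̄` of a state `ω` to arbitrary nonnegative (possibly
unbounded) sequences, with values in `[0,∞]`:
`ω̄(x) = sup { ω(y) : y ∈ ℓ∞, 0 ≤ y ≤ x }`. -/
noncomputable def LinfState.ext (S : LinfState) (x : ℕ → ℝ) : ℝ≥0∞ :=
  ⨆ y ∈ {y : ℕ → ℝ | Bdd y ∧ (∀ n, 0 ≤ y n) ∧ ∀ n, y n ≤ x n},
    ENNReal.ofReal (S.toFun y)

/-- The `ψ`-Cesàro transform followed by the extended state `ω̄`. -/
noncomputable def tau (S : LinfState) (ψ : ℝ → ℝ) (a : ℕ → ℝ) : ℝ≥0∞ :=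
  S.ext (fun n => (∑ k ∈ Finset.range (n + 1), a k) / ψ ((n : ℝ) + 1))

/-
Let `x` be the sum of the `ψ(n+1)`-Cesàro means of `a` and `b`, `T` the `ψ(2n+1)`-Cesàro mean
of `a + b`, and `z n = 1 - ψ(n+1)/ψ(2n+1)`; then `x = T + x z`. Since `ω̄` is additive on
nonnegative sequences, it suffices to show `ω̄(x z) = 0`.

First, `ω(z) = 0`: concavity makes `u n = ψ(2n+1)/ψ(n+1)` bounded, `z + 1 ≤ u` pointwise, and
`ω(u) = 1`. Next, let `y` be a bounded minorant of `x z` and `y₀ ≤ M` a bounded minorant of `x`.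
Cutting `y` at `M z` splits it into a part of `ω`-value at most `M ω(z) = 0` and a remainder `w`
with `w + y₀ ≤ x`, so `ω(y) + ω(y₀) ≤ ω̄(x)`. Taking the supremum over `y₀` gives
`ω(y) + ω̄(x) ≤ ω̄(x)`, hence `ω(y) ≤ 0` because `ω̄(x) < ∞`.
-/

theorem Bdd.const (c : ℝ) : Bdd fun _ => c := ⟨|c|, fun _ => le_rfl⟩

theorem Bdd.add {x y : ℕ → ℝ} (hx : Bdd x) (hy : Bdd y) : Bdd (x + y) := by
  obtain ⟨C, hC⟩ := hx
  obtain ⟨D, hD⟩ := hy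
  exact ⟨C + D, fun n => (abs_add_le _ _).trans (add_le_add (hC n) (hD n))⟩

theorem Bdd.sub {x y : ℕ → ℝ} (hx : Bdd x) (hy : Bdd y) : Bdd (x - y) := by
  obtain ⟨C, hC⟩ := hx
  obtain ⟨D, hD⟩ := hy
  exact ⟨C + D, fun n => (abs_sub _ _).trans (add_le_add (hC n) (hD n))⟩

theorem Bdd.smul {x : ℕ → ℝ} (hx : Bdd x) (c : ℝ) : Bdd (c • x) := by
  obtain ⟨C, hC⟩ := hx
  refine ⟨|c| * C, fun n => ?_⟩
  rw [Pi.smul_apply, smul_eq_mul, abs_mul]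
  exact mul_le_mul_of_nonneg_left (hC n) (abs_nonneg c)

theorem Bdd.of_nonneg_of_le {x y : ℕ → ℝ} (hy : Bdd y) (h0 : ∀ n, 0 ≤ x n)
    (h : ∀ n, x n ≤ y n) : Bdd x := by
  obtain ⟨C, hC⟩ := hy
  exact ⟨C, fun n => abs_le.2 ⟨by linarith [h0 n, abs_nonneg (y n), hC n],
    (h n).trans ((le_abs_self _).trans (hC n))⟩⟩

theorem sub_min_mul_add_le {x y y₀ z M : ℝ} (hz0 : 0 ≤ z) (hz1 : z ≤ 1) (hy : y ≤ x * z)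
    (hy₀x : y₀ ≤ x) (hy₀M : y₀ ≤ M) : y - min y (M * z) + y₀ ≤ x := by
  rcases le_total y (M * z) with h | h
  · rw [min_eq_left h]
    linarith
  · rw [min_eq_right h]
    rcases le_total M x with hMx | hxM <;> nlinarith

namespace LinfState

variable (S : LinfState)

theorem mono {x y : ℕ → ℝ} (hx : Bdd x) (hy : Bdd y) (h : ∀ n, x n ≤ y n) :
    S.toFun x ≤ S.toFun y := by
  have hyx : Bdd (y - x) := hy.sub hx
  have hsplit := S.map_add' x (y - x) hx hyx
  rw [add_sub_cancel] at hsplit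
  linarith [S.pos' (y - x) hyx fun n => sub_nonneg.2 (h n)]

theorem ofReal_toFun_add {u v : ℕ → ℝ} (hu : Bdd u) (hv : Bdd v) (hu0 : ∀ n, 0 ≤ u n)
    (hv0 : ∀ n, 0 ≤ v n) :
    ENNReal.ofReal (S.toFun (u + v)) =
      ENNReal.ofReal (S.toFun u) + ENNReal.ofReal (S.toFun v) := by
  rw [S.map_add' u v hu hv, ENNReal.ofReal_add (S.pos' u hu hu0) (S.pos' v hv hv0)]

theorem le_ext {x y : ℕ → ℝ} (hy : Bdd y) (hy0 : ∀ n, 0 ≤ y n) (hyx : ∀ n, y n ≤ x n) :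
    ENNReal.ofReal (S.toFun y) ≤ S.ext x :=
  le_iSup₂ (f := fun y _ => ENNReal.ofReal (S.toFun y)) y ⟨hy, hy0, hyx⟩

theorem ext_le {x : ℕ → ℝ} {c : ℝ≥0∞}
    (h : ∀ y, Bdd y → (∀ n, 0 ≤ y n) → (∀ n, y n ≤ x n) → ENNReal.ofReal (S.toFun y) ≤ c) :
    S.ext x ≤ c :=
  iSup₂_le fun y hy => h y hy.1 hy.2.1 hy.2.2

theorem ofReal_add_le_ext {u v x : ℕ → ℝ} (hu : Bdd u) (hv : Bdd v) (hu0 : ∀ n, 0 ≤ u n)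
    (hv0 : ∀ n, 0 ≤ v n) (huv : ∀ n, u n + v n ≤ x n) :
    ENNReal.ofReal (S.toFun u) + ENNReal.ofReal (S.toFun v) ≤ S.ext x := by
  rw [← S.ofReal_toFun_add hu hv hu0 hv0]
  exact S.le_ext (hu.add hv) (fun n => add_nonneg (hu0 n) (hv0 n)) huv

theorem ext_add {x y : ℕ → ℝ} (hx0 : ∀ n, 0 ≤ x n) (hy0 : ∀ n, 0 ≤ y n) :
    S.ext (fun n => x n + y n) = S.ext x + S.ext y := by
  apply le_antisymm
  · refine S.ext_le fun w hw hw0 hwxy => ?_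
    have hmin0 : ∀ n, 0 ≤ (w ⊓ x) n := fun n => le_min (hw0 n) (hx0 n)
    have hrest0 : ∀ n, 0 ≤ (w - w ⊓ x) n := fun n => sub_nonneg.2 (min_le_left _ _)
    have hmin : Bdd (w ⊓ x) := hw.of_nonneg_of_le hmin0 fun n => min_le_left _ _
    have hrest : Bdd (w - w ⊓ x) := hw.of_nonneg_of_le hrest0 fun n => sub_le_self _ (hmin0 n)
    rw [← add_sub_cancel (w ⊓ x) w, S.ofReal_toFun_add hmin hrest hmin0 hrest0]
    refine add_le_add (S.le_ext hmin hmin0 fun n => min_le_right _ _)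
      (S.le_ext hrest hrest0 fun n => ?_)
    show w n - min (w n) (x n) ≤ y n
    rcases le_total (w n) (x n) with h | h
    · rw [min_eq_left h, sub_self]
      exact hy0 n
    · rw [min_eq_right h]
      linarith [hwxy n]
  · refine ENNReal.biSup_add_biSup_le ?_ ?_ fun u ⟨hu, hu0, hux⟩ v ⟨hv, hv0, hvy⟩ =>
      S.ofReal_add_le_ext hu hv hu0 hv0 fun n => add_le_add (hux n) (hvy n)
    exacts [⟨0, Bdd.const 0, fun _ => le_rfl, hx0⟩, ⟨0, Bdd.const 0, fun _ => le_rfl, hy0⟩]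

theorem ofReal_add_le_ext_of_le_mul {x y y₀ z : ℕ → ℝ} (hz : Bdd z) (hz0 : ∀ n, 0 ≤ z n)
    (hz1 : ∀ n, z n ≤ 1) (hSz : S.toFun z = 0) (hy : Bdd y) (hy0 : ∀ n, 0 ≤ y n)
    (hyxz : ∀ n, y n ≤ x n * z n) (hy₀ : Bdd y₀) (hy₀0 : ∀ n, 0 ≤ y₀ n)
    (hy₀x : ∀ n, y₀ n ≤ x n) :
    ENNReal.ofReal (S.toFun y) + ENNReal.ofReal (S.toFun y₀) ≤ S.ext x := by
  obtain ⟨M, hM⟩ := id hy₀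
  have hM0 : 0 ≤ M := (abs_nonneg _).trans (hM 0)
  set v := y ⊓ M • z
  have hv0 : ∀ n, 0 ≤ v n := fun n => le_min (hy0 n) (mul_nonneg hM0 (hz0 n))
  have hw0 : ∀ n, 0 ≤ (y - v) n := fun n => sub_nonneg.2 (min_le_left _ _)
  have hv : Bdd v := hy.of_nonneg_of_le hv0 fun n => min_le_left _ _
  have hw : Bdd (y - v) := hy.of_nonneg_of_le hw0 fun n => sub_le_self _ (hv0 n)
  have hSv : S.toFun v ≤ 0 := calc
    S.toFun v ≤ S.toFun (M • z) := S.mono hv (hz.smul M) fun n => min_le_right _ _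
    _ = 0 := by rw [S.map_smul' M z hz, hSz, mul_zero]
  have hSy : S.toFun y ≤ S.toFun (y - v) := by
    have hsplit := S.map_add' v (y - v) hv hw
    rw [add_sub_cancel] at hsplit
    linarith
  calc ENNReal.ofReal (S.toFun y) + ENNReal.ofReal (S.toFun y₀)
      ≤ ENNReal.ofReal (S.toFun (y - v)) + ENNReal.ofReal (S.toFun y₀) := by gcongr
    _ ≤ S.ext x := S.ofReal_add_le_ext hw hy₀ hw0 hy₀0 fun n =>
      sub_min_mul_add_le (hz0 n) (hz1 n) (hyxz n) (hy₀x n) ((le_abs_self _).trans (hM n))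

theorem ext_mul_eq_zero {x z : ℕ → ℝ} (hx0 : ∀ n, 0 ≤ x n) (hx : S.ext x ≠ ⊤) (hz : Bdd z)
    (hz0 : ∀ n, 0 ≤ z n) (hz1 : ∀ n, z n ≤ 1) (hSz : S.toFun z = 0) :
    S.ext (fun n => x n * z n) = 0 := by
  refine le_antisymm (S.ext_le fun y hy hy0 hyxz => ?_) bot_le
  refine ENNReal.le_of_add_le_add_right hx ?_
  rw [zero_add, LinfState.ext, ENNReal.add_biSup]
  · exact iSup₂_le fun y₀ hy₀ =>
      S.ofReal_add_le_ext_of_le_mul hz hz0 hz1 hSz hy hy0 hyxz hy₀.1 hy₀.2.1 hy₀.2.2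
  · exact ⟨0, Bdd.const 0, fun _ => le_rfl, hx0⟩

end LinfState

section

variable {ψ : ℝ → ℝ}

theorem ConcaveOn.apply_two_mul_add_one_le (hconc : ConcaveOn ℝ (Set.Ioi 0) ψ)
    (h1 : 0 ≤ ψ 1) {t : ℝ} (ht : 0 ≤ t) : ψ (2 * t + 1) ≤ 2 * ψ (t + 1) := by
  have hmid := hconc.2 (Set.mem_Ioi.2 one_pos) (Set.mem_Ioi.2 (by linarith : 0 < 2 * t + 1))
    (by norm_num : (0 : ℝ) ≤ 1 / 2) (by norm_num : (0 : ℝ) ≤ 1 / 2) (by norm_num)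
  simp only [smul_eq_mul] at hmid
  rw [show 1 / 2 * 1 + 1 / 2 * (2 * t + 1) = t + 1 by ring] at hmid
  linarith

theorem one_sub_div_nonneg_of_monotoneOn (hpos : ∀ t > (0 : ℝ), 0 < ψ t)
    (hmono : MonotoneOn ψ (Set.Ioi 0)) {t : ℝ} (ht : 0 ≤ t) :
    0 ≤ 1 - ψ (t + 1) / ψ (2 * t + 1) :=
  sub_nonneg.2 <| div_le_one_of_le₀
    (hmono (Set.mem_Ioi.2 (by linarith)) (Set.mem_Ioi.2 (by linarith)) (by linarith))
    (hpos _ (by linarith)).le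

theorem one_sub_div_le_one (hpos : ∀ t > (0 : ℝ), 0 < ψ t) {t : ℝ} (ht : 0 ≤ t) :
    1 - ψ (t + 1) / ψ (2 * t + 1) ≤ 1 :=
  sub_le_self _ (div_pos (hpos _ (by linarith)) (hpos _ (by linarith))).le

theorem LinfState.toFun_one_sub_div_eq_zero (S : LinfState) (hpos : ∀ t > (0 : ℝ), 0 < ψ t)
    (hmono : MonotoneOn ψ (Set.Ioi 0)) (hconc : ConcaveOn ℝ (Set.Ioi 0) ψ)
    (hω1 : S.toFun (fun n => ψ (2 * (n : ℝ) + 1) / ψ ((n : ℝ) + 1)) = 1) :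
    S.toFun (fun n => 1 - ψ ((n : ℝ) + 1) / ψ (2 * (n : ℝ) + 1)) = 0 := by
  set u : ℕ → ℝ := fun n => ψ (2 * (n : ℝ) + 1) / ψ ((n : ℝ) + 1)
  set z : ℕ → ℝ := fun n => 1 - ψ ((n : ℝ) + 1) / ψ (2 * (n : ℝ) + 1)
  have hψ1 (n : ℕ) : 0 < ψ ((n : ℝ) + 1) := hpos _ (by positivity)
  have hψ2 (n : ℕ) : 0 < ψ (2 * (n : ℝ) + 1) := hpos _ (by positivity)
  have hu : Bdd u := (Bdd.const 2).of_nonneg_of_le (fun n => (div_pos (hψ2 n) (hψ1 n)).le)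
    fun n => (div_le_iff₀ (hψ1 n)).2 <|
      hconc.apply_two_mul_add_one_le (hpos 1 one_pos).le n.cast_nonneg
  have hz0 (n : ℕ) : 0 ≤ z n := one_sub_div_nonneg_of_monotoneOn hpos hmono n.cast_nonneg
  have hz : Bdd z :=
    (Bdd.const 1).of_nonneg_of_le hz0 fun n => one_sub_div_le_one hpos n.cast_nonneg
  -- with `r = u n > 0`: `z n + 1 = 2 - 1 / r ≤ r`, as `(r - 1) ^ 2 ≥ 0`
  have hzu (n : ℕ) : z n + 1 ≤ u n := by
    have hr : 0 < u n := div_pos (hψ2 n) (hψ1 n)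
    have hinv : ψ ((n : ℝ) + 1) / ψ (2 * (n : ℝ) + 1) = (u n)⁻¹ := (inv_div _ _).symm
    simp only [z, hinv]
    rw [← sub_nonneg]
    have : u n - (1 - (u n)⁻¹ + 1) = (u n - 1) ^ 2 / u n := by field_simp; ring
    rw [this]
    positivity
  have hle := S.mono (hz.add (Bdd.const 1)) hu hzu
  rw [S.map_add' z _ hz (Bdd.const 1), S.map_one', hω1] at hle
  exact le_antisymm (by linarith) (S.pos' z hz hz0)

end

theorem tau_add_eq_general (S : LinfState) (ψ : ℝ → ℝ)
    (hpos : ∀ t > (0 : ℝ), 0 < ψ t)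
    (hmono : MonotoneOn ψ (Set.Ioi (0 : ℝ)))
    (hconc : ConcaveOn ℝ (Set.Ioi (0 : ℝ)) ψ)
    (hω1 : S.toFun (fun n => ψ (2 * (n : ℝ) + 1) / ψ ((n : ℝ) + 1)) = 1)
    (a b : ℕ → ℝ)
    (ha0 : ∀ k, 0 ≤ a k) (hb0 : ∀ k, 0 ≤ b k)
    (hafin : tau S ψ a < ⊤) (hbfin : tau S ψ b < ⊤) :
    tau S ψ a + tau S ψ b =
      S.ext (fun n => (∑ k ∈ Finset.range (n + 1), (a k + b k)) /
        ψ (2 * (n : ℝ) + 1)) := by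
  set z : ℕ → ℝ := fun n => 1 - ψ ((n : ℝ) + 1) / ψ (2 * (n : ℝ) + 1)
  set x : ℕ → ℝ := fun n => (∑ k ∈ Finset.range (n + 1), a k) / ψ ((n : ℝ) + 1) +
    (∑ k ∈ Finset.range (n + 1), b k) / ψ ((n : ℝ) + 1)
  set T : ℕ → ℝ := fun n => (∑ k ∈ Finset.range (n + 1), (a k + b k)) / ψ (2 * (n : ℝ) + 1)
  have hψ1 (n : ℕ) : 0 < ψ ((n : ℝ) + 1) := hpos _ (by positivity)
  have hψ2 (n : ℕ) : 0 < ψ (2 * (n : ℝ) + 1) := hpos _ (by positivity)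
  have hcesaro0 {c : ℕ → ℝ} (hc : ∀ k, 0 ≤ c k) (n : ℕ) {p : ℝ} (hp : 0 < p) :
      0 ≤ (∑ k ∈ Finset.range (n + 1), c k) / p :=
    div_nonneg (Finset.sum_nonneg fun k _ => hc k) hp.le
  have hz0 (n : ℕ) : 0 ≤ z n := one_sub_div_nonneg_of_monotoneOn hpos hmono n.cast_nonneg
  have hz1 (n : ℕ) : z n ≤ 1 := one_sub_div_le_one hpos n.cast_nonneg
  have hx0 (n : ℕ) : 0 ≤ x n := add_nonneg (hcesaro0 ha0 n (hψ1 n)) (hcesaro0 hb0 n (hψ1 n))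
  have htau : tau S ψ a + tau S ψ b = S.ext x :=
    (S.ext_add (hcesaro0 ha0 · (hψ1 _)) (hcesaro0 hb0 · (hψ1 _))).symm
  have hsplit : x = fun n => T n + x n * z n := by
    funext n
    simp only [x, T, z, Finset.sum_add_distrib]
    field_simp [(hψ1 n).ne', (hψ2 n).ne']
    ring
  have hnull : S.ext (fun n => x n * z n) = 0 :=
    S.ext_mul_eq_zero hx0 (htau ▸ ENNReal.add_lt_top.2 ⟨hafin, hbfin⟩).ne
      ((Bdd.const 1).of_nonneg_of_le hz0 hz1) hz0 hz1
      (S.toFun_one_sub_div_eq_zero hpos hmono hconc hω1)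
  have hT0 (n : ℕ) : 0 ≤ T n := hcesaro0 (fun k => add_nonneg (ha0 k) (hb0 k)) n (hψ2 n)
  rw [htau, hsplit, S.ext_add hT0 fun n => mul_nonneg (hx0 n) (hz0 n), hnull, add_zero]

/-- If `ω` is a singular dilation-invariant state with
`ω({ψ(2n+1)/ψ(n+1)}) = 1`, then for any two nonincreasing nonnegative
sequences `a, b` with finite `τ_ω`-values,
`τ_ω(a) + τ_ω(b) = ω̄({(1/ψ(2n+1)) ∑_{k=0}^{n} (a(k)+b(k))})`. -/
theorem tau_add_eq (S : LinfState) (ψ : ℝ → ℝ)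
    (hpos : ∀ t > (0 : ℝ), 0 < ψ t)
    (hmono : MonotoneOn ψ (Set.Ioi (0 : ℝ)))
    (hconc : ConcaveOn ℝ (Set.Ioi (0 : ℝ)) ψ)
    (hsing : ∀ x : ℕ → ℝ, Bdd x → Tendsto x atTop (nhds 0) → S.toFun x = 0)
    (hdilinv : ∀ n : ℕ, 1 ≤ n → ∀ x : ℕ → ℝ, Bdd x →
      S.toFun (fun k => x (k / n)) = S.toFun x)
    (hω1 : S.toFun (fun n => ψ (2 * (n : ℝ) + 1) / ψ ((n : ℝ) + 1)) = 1)
    (a b : ℕ → ℝ) (ha : Antitone a) (hb : Antitone b)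
    (ha0 : ∀ k, 0 ≤ a k) (hb0 : ∀ k, 0 ≤ b k)
    (hafin : tau S ψ a < ⊤) (hbfin : tau S ψ b < ⊤) :
    tau S ψ a + tau S ψ b =
      S.ext (fun n => (∑ k ∈ Finset.range (n + 1), (a k + b k)) /
        ψ (2 * (n : ℝ) + 1)) :=
  tau_add_eq_general S ψ hpos hmono hconc hω1 a b ha0 hb0 hafin hbfin
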